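/- In the RURV setting (exact arithmetic), suppose additionally that A has rank exactly r (equivalently σ_r > 0 and σ_{r+1} = 0) and that the leading r×r block X₁₁ = X(1:r,1:r) of X = Qᵀ·Vᵀ is invertible. Then the column space of A equals the span of the first r columns of U; that is, the range of the linear map x ↦ A·x equals the span of the vectors U(:,1), …, U(:,r). -/

import Mathlib

/-!
Let `P₁` be the first `r` columns of `P` and `Σ₁ = diag(σ₁, …, σ_r)`. Since `σ` vanishes beyond
`r`, `A = P₁ Σ₁ Q₁ᵀ`, so `range A ⊆ range P₁`. The first `r` columns of `A Vᵀ` are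
`P₁ (Σ₁ X₁₁)` with `Σ₁ X₁₁` invertible, so they span `range P₁`, which is therefore contained in
`range A`; as `R` is upper triangular, the same columns are `U₁ R₁₁`, so `range P₁ ⊆ range U₁`.
Finally `P₁` has orthonormal columns, so `range P₁` has dimension `r`, while `U₁` has only `r`
columns.
-/

namespace Matrix

variable {α k l m n : Type*}

theorem mul_eq_submatrix_mul_submatrix [NonUnitalNonAssocSemiring α] [Fintype k] [Fintype m]
    (P : Matrix l m α) {D : Matrix m n α} {ι : k → m} (hι : Function.Injective ι)
    (hD : ∀ i ∉ Set.range ι, ∀ j, D i j = 0) :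
    P * D = P.submatrix id ι * D.submatrix ι id := by
  ext a b
  exact (Fintype.sum_of_injective ι hι _ _ (fun i hi => by simp [hD i hi]) fun _ => rfl).symm

theorem mul_diagonal_mul_eq_submatrix [NonUnitalSemiring α] [Fintype k] [Fintype m]
    [DecidableEq k] [DecidableEq m] (P : Matrix l m α) {σ : m → α} (M : Matrix m n α)
    {ι : k → m} (hι : Function.Injective ι) (hσ : ∀ i ∉ Set.range ι, σ i = 0) :
    P * diagonal σ * M = P.submatrix id ι * (diagonal (σ ∘ ι) * M.submatrix ι id) := by
  rw [Matrix.mul_assoc, mul_eq_submatrix_mul_submatrix P hι fun i hi j => by simp [hσ i hi]]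
  congr 1
  ext a b
  simp [diagonal_mul]

theorem BlockTriangular.mul_submatrix_castLE [NonUnitalNonAssocSemiring α] {r s : ℕ}
    {R : Matrix (Fin s) (Fin s) α} (hR : R.BlockTriangular id) (U : Matrix l (Fin s) α)
    (h : r ≤ s) :
    (U * R).submatrix id (Fin.castLE h) =
      U.submatrix id (Fin.castLE h) * R.submatrix (Fin.castLE h) (Fin.castLE h) := by
  have hR_rows : ∀ i ∉ Set.range (Fin.castLE h), ∀ j, R.submatrix id (Fin.castLE h) i j = 0 := by
    intro i hi j
    rw [Fin.range_castLE, Set.mem_ofPred_eq, not_lt] at hi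
    exact hR (Fin.lt_def.mpr (lt_of_lt_of_le j.isLt hi))
  rw [submatrix_mul U R id id _ Function.bijective_id, submatrix_id_id,
    mul_eq_submatrix_mul_submatrix U (Fin.castLE_injective h) hR_rows]
  rfl

theorem range_mulVecLin_mul_le [CommSemiring α] [Fintype m] [Fintype n] (A : Matrix l m α)
    (B : Matrix m n α) :
    LinearMap.range (A * B).mulVecLin ≤ LinearMap.range A.mulVecLin := by
  rw [mulVecLin_mul]
  exact LinearMap.range_comp_le_range _ _

theorem range_mulVecLin_mul_of_isUnit [CommRing α] [Fintype n] [DecidableEq n]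
    (A : Matrix l n α) {B : Matrix n n α} (hB : IsUnit B) :
    LinearMap.range (A * B).mulVecLin = LinearMap.range A.mulVecLin := by
  rw [mulVecLin_mul, LinearMap.range_comp,
    LinearMap.range_eq_top.mpr (mulVec_surjective_iff_isUnit.mpr hB), Submodule.map_top]

theorem rank_submatrix_of_transpose_mul_self_eq_one [CommSemiring α] [StrongRankCondition α]
    [Fintype l] [Fintype k] [DecidableEq k] [DecidableEq m] {P : Matrix l m α} (hP : Pᵀ * P = 1)
    {ι : k → m} (hι : Function.Injective ι) :
    (P.submatrix id ι).rank = Fintype.card k := by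
  refine le_antisymm (rank_le_card_width _) ?_
  calc Fintype.card k = (1 : Matrix k k α).rank := rank_one.symm
    _ = ((P.submatrix id ι)ᵀ * P.submatrix id ι).rank := by
      rw [transpose_submatrix, ← submatrix_mul _ _ _ _ _ Function.bijective_id, hP,
        submatrix_one _ hι]
    _ ≤ (P.submatrix id ι).rank := rank_mul_le_right _ _

end Matrix

open Matrix

/-- RURV, exact arithmetic: with `A = P·Σ·Qᵀ` an SVD, `V` orthogonal,
`X = Qᵀ·Vᵀ`, and `A·Vᵀ = U·R` a QR decomposition, if `A` has rank exactly `r`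
(equivalently `σ_r > 0` and `σ_{r+1} = 0`) and the leading `r×r` block of `X` is
invertible, then the column space of `A` equals the span of the first `r`
columns of `U`. -/
theorem rurv_rank_revealing_column_space {n : ℕ} (r : ℕ) (hrn : r < n)
    (A P Q V U R : Matrix (Fin n) (Fin n) ℝ) (σ : Fin n → ℝ)
    (hP : Pᵀ * P = 1)
    (hσdec : Antitone σ) (hσ0 : ∀ i, 0 ≤ σ i)
    (hA : A = P * diagonal σ * Qᵀ)
    (hRtri : R.BlockTriangular id)
    (hQR : A * Vᵀ = U * R)
    (hσr : 0 < σ ⟨r - 1, by omega⟩) (hσr1 : σ ⟨r, hrn⟩ = 0)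
    (hX11 : IsUnit ((Qᵀ * Vᵀ).submatrix (Fin.castLE hrn.le) (Fin.castLE hrn.le))) :
    LinearMap.range A.mulVecLin =
      Submodule.span ℝ
        (Set.range fun i : Fin r => fun j : Fin n => U j (Fin.castLE hrn.le i)) := by
  set ι := Fin.castLE hrn.le
  have hι : Function.Injective ι := Fin.castLE_injective _
  have hσ_tail : ∀ i ∉ Set.range ι, σ i = 0 := by
    intro i hi
    rw [Fin.range_castLE, Set.mem_ofPred_eq, not_lt] at hi
    exact le_antisymm (hσr1 ▸ hσdec (Fin.le_def.mpr hi)) (hσ0 i)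
  have hσ_head : IsUnit (σ ∘ ι) := Pi.isUnit_iff.mpr fun j =>
    (hσr.trans_le (hσdec (Fin.le_def.mpr (by simp [ι]; omega)))).ne'.isUnit
  have hAV : (A * Vᵀ).submatrix id ι =
      P.submatrix id ι * (diagonal (σ ∘ ι) * (Qᵀ * Vᵀ).submatrix ι ι) := by
    rw [hA, Matrix.mul_assoc _ Qᵀ, mul_diagonal_mul_eq_submatrix P _ hι hσ_tail,
      submatrix_mul _ _ id id ι Function.bijective_id, submatrix_id_id]
    rfl
  have hAV_unit : IsUnit (diagonal (σ ∘ ι) * (Qᵀ * Vᵀ).submatrix ι ι) :=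
    (isUnit_diagonal.mpr hσ_head).mul hX11
  have hrange_A :
      LinearMap.range A.mulVecLin = LinearMap.range (P.submatrix id ι).mulVecLin := by
    refine le_antisymm ?_ ?_
    · rw [hA, mul_diagonal_mul_eq_submatrix P _ hι hσ_tail]
      exact range_mulVecLin_mul_le _ _
    · rw [← range_mulVecLin_mul_of_isUnit _ hAV_unit, ← hAV,
        submatrix_mul _ _ id id ι Function.bijective_id, submatrix_id_id]
      exact range_mulVecLin_mul_le _ _
  have hrange_U : LinearMap.range (P.submatrix id ι).mulVecLin ≤
      LinearMap.range (U.submatrix id ι).mulVecLin := by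
    rw [← range_mulVecLin_mul_of_isUnit _ hAV_unit, ← hAV, hQR, hRtri.mul_submatrix_castLE]
    exact range_mulVecLin_mul_le _ _
  calc LinearMap.range A.mulVecLin = LinearMap.range (P.submatrix id ι).mulVecLin := hrange_A
    _ = LinearMap.range (U.submatrix id ι).mulVecLin :=
      Submodule.eq_of_le_of_finrank_le hrange_U <|
        (rank_le_card_width _).trans_eq (rank_submatrix_of_transpose_mul_self_eq_one hP hι).symm
    _ = _ := range_mulVecLin _
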